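/- arXiv:2605.23761 — 2 statements merged into one kernel-verified Lean document; each statement's English description precedes it below -/
import Mathlib

section
/- Let A = Aᵀ ∈ ℝ^{n×n}, run CG (PCG with H₀ = I) and DIOM on Ax = b from the same x₀, and suppose P_kᵀAP_k is symmetric positive definite for k = 1,…,j. Then for k = 0,…,j−1, the CG direction and step length satisfy d_k^{CG} = ζ_{k+1} u_{k+1,k+1} p_{k+1} and α_k^{CG} = 1/u_{k+1,k+1}, where p_{k+1}, ζ_{k+1} are the DIOM direction and solution coefficient and u_{k+1,k+1} is the (k+1)-st LU pivot of the Lanczos tridiagonal matrix. In particular, negative curvature in CG (α_k^{CG} < 0) corresponds exactly to a negative pivot u_{k+1,k+1} < 0 in DIOM. -/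
open Matrix

/-!
Both methods live on the Lanczos basis `v₁, v₂, …`. Since `A` is symmetric the Arnoldi
coefficients form a symmetric tridiagonal `T_j`, so in `T_j = L_j U_j` the factor `U_j` is upper
bidiagonal with superdiagonal `t_{m+1,m}`, and `V_j = P_j U_j` reads
`v_{m+1} = t_{m+1,m} p_m + u_{m+1} p_{m+1}`. Hence `p_m ∈ span(v₁, …, v_m)` with `v_m`-coefficient
`1 / u_m`, and the three-term recurrence gives `A p_m = v_m + ℓ_{m+1} v_{m+1}`, so
`p_mᵀ A p_m = 1 / u_m`.

By induction on `k`, the CG gradients and directions are `g_k = -ζ_{k+1} v_{k+1}` and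
`d_k = ζ_{k+1} u_{k+1} p_{k+1}`: the gradient update reproduces `ζ_{k+2} = -ℓ_{k+2} ζ_{k+1}`
and the direction update reproduces the relation between `v` and `p` above. Then
`α_k = ‖g_k‖² / d_kᵀ A d_k = 1 / u_{k+1}`.
-/

namespace Matrix

variable {R : Type*} {k : ℕ}

def IsLowerBidiagonal [Zero R] (M : Matrix (Fin k) (Fin k) R) : Prop :=
  ∀ i l : Fin k, (i : ℕ) ≠ l → (i : ℕ) ≠ l + 1 → M i l = 0

def IsUpperBidiagonal [Zero R] (M : Matrix (Fin k) (Fin k) R) : Prop :=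
  ∀ i l : Fin k, (l : ℕ) ≠ i → (l : ℕ) ≠ i + 1 → M i l = 0

theorem IsUpperBidiagonal.transpose [Zero R] {M : Matrix (Fin k) (Fin k) R}
    (hM : M.IsUpperBidiagonal) : Mᵀ.IsLowerBidiagonal :=
  fun i l => hM l i

section

variable {β : Type*} [NonUnitalNonAssocSemiring R] {M : Matrix (Fin k) (Fin k) R}
  {N : Matrix (Fin k) β R}

theorem IsLowerBidiagonal.mul_apply_of_val_eq_zero (hM : M.IsLowerBidiagonal) {i : Fin k}
    (hi : (i : ℕ) = 0) (c : β) : (M * N) i c = M i i * N i c :=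
  (mul_apply ..).trans <| Fintype.sum_eq_single i fun q hq => by
    rw [hM i q (fun h => hq (Fin.ext h.symm)) (by omega), zero_mul]

theorem IsLowerBidiagonal.mul_apply_of_val_eq_succ (hM : M.IsLowerBidiagonal) {i m : Fin k}
    (hi : (i : ℕ) = m + 1) (c : β) : (M * N) i c = M i m * N m c + M i i * N i c :=
  (mul_apply ..).trans <| Fintype.sum_eq_add m i (fun h => by rw [h] at hi; omega)
    fun q hq => by
      rw [hM i q (fun h => hq.2 (Fin.ext h.symm)) (fun h => hq.1 (Fin.ext (by omega))), zero_mul]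

end

section

variable {α : Type*} [CommSemiring R] {M : Matrix α (Fin k) R} {N : Matrix (Fin k) (Fin k) R}

theorem IsUpperBidiagonal.mul_apply_of_val_eq_zero (hN : N.IsUpperBidiagonal) (r : α)
    {c : Fin k} (hc : (c : ℕ) = 0) : (M * N) r c = M r c * N c c := by
  rw [← transpose_apply (M * N), transpose_mul, hN.transpose.mul_apply_of_val_eq_zero hc,
    transpose_apply, transpose_apply, mul_comm]

theorem IsUpperBidiagonal.mul_apply_of_val_eq_succ (hN : N.IsUpperBidiagonal) (r : α)
    {c m : Fin k} (hc : (c : ℕ) = m + 1) :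
    (M * N) r c = M r m * N m c + M r c * N c c := by
  rw [← transpose_apply (M * N), transpose_mul, hN.transpose.mul_apply_of_val_eq_succ hc]
  simp only [transpose_apply, mul_comm]

end

section

variable [Semiring R] {L U : Matrix (Fin k) (Fin k) R}

theorem IsLowerBidiagonal.isUpperBidiagonal_of_mul (hL : L.IsLowerBidiagonal)
    (hL1 : ∀ i, L i i = 1) (hU : U.IsUpperTriangular)
    (hLU : ∀ i l : Fin k, (i : ℕ) + 1 < l → (L * U) i l = 0) : U.IsUpperBidiagonal := by
  suffices ∀ m (i l : Fin k), (i : ℕ) = m → (i : ℕ) + 1 < l → U i l = 0 by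
    intro i l h1 h2
    rcases lt_or_gt_of_ne h1 with hli | hil
    · exact hU hli
    · exact this i i l rfl (by omega)
  intro m
  induction m with
  | zero =>
    intro i l hi hil
    simpa [hL.mul_apply_of_val_eq_zero hi, hL1] using hLU i l hil
  | succ m ih =>
    intro i l hi hil
    have hU' := ih ⟨m, by omega⟩ l rfl (by simp; omega)
    simpa [hL.mul_apply_of_val_eq_succ (m := ⟨m, by omega⟩) hi, hL1, hU'] using hLU i l hil

theorem IsLowerBidiagonal.mul_apply_of_val_eq_succ_right (hL : L.IsLowerBidiagonal)
    (hL1 : ∀ i, L i i = 1) (hU : U.IsUpperBidiagonal) {i l : Fin k} (hl : (l : ℕ) = i + 1) :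
    (L * U) i l = U i l := by
  rcases Nat.eq_zero_or_eq_succ_pred (i : ℕ) with hi | hi
  · rw [hL.mul_apply_of_val_eq_zero hi, hL1, one_mul]
  · rw [hL.mul_apply_of_val_eq_succ (m := ⟨(i : ℕ) - 1, by omega⟩) (by simp; omega),
      hU _ l (by simp; omega) (by simp; omega), hL1, mul_zero, zero_add, one_mul]

end

theorem IsUpperTriangular.apply_self_ne_zero {ι R : Type*} [Fintype ι] [DecidableEq ι]
    [LinearOrder ι] [CommRing R] [Nontrivial R] {M : Matrix ι ι R} (hM : M.IsUpperTriangular)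
    (hdet : IsUnit M.det) (i : ι) : M i i ≠ 0 := by
  rw [det_of_isUpperTriangular hM] at hdet
  exact (isUnit_of_dvd_unit (Finset.dvd_prod_of_mem _ (Finset.mem_univ i)) hdet).ne_zero

theorem isUnit_det_of_posDef_transpose_mul_mul {ι κ : Type*} [Fintype ι] [DecidableEq ι]
    [Nonempty ι] [Fintype κ] {A : Matrix κ κ ℝ} {V : Matrix κ ι ℝ} {U : Matrix ι ι ℝ}
    (h : ((V * U⁻¹)ᵀ * A * (V * U⁻¹)).PosDef) : IsUnit U.det := by
  -- a singular `U` has `U⁻¹ = 0` in Mathlib, which would make the positive definite matrix `0`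
  by_contra hU
  rw [nonsing_inv_apply_not_isUnit _ hU, Matrix.mul_zero, Matrix.mul_zero] at h
  exact not_isUnit_zero h.isUnit

theorem IsSymm.dotProduct_mulVec_comm {m R : Type*} [Fintype m] [CommSemiring R]
    {A : Matrix m m R} (hA : A.IsSymm) (x y : m → R) : x ⬝ᵥ A *ᵥ y = y ⬝ᵥ A *ᵥ x := by
  rw [dotProduct_mulVec, ← mulVec_transpose, hA.eq, dotProduct_comm]

theorem transpose_mul_mul_apply {ι κ R : Type*} [Fintype κ] [CommSemiring R]
    (A : Matrix κ κ R) (X : Matrix κ ι R) (i l : ι) :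
    (Xᵀ * A * X) i l = Xᵀ i ⬝ᵥ A *ᵥ Xᵀ l := by
  rw [Matrix.mul_assoc, mul_apply]
  simp [mul_apply, dotProduct, mulVec, Finset.mul_sum]

end Matrix

structure IsArnoldiBasis {n : ℕ} (A : Matrix (Fin n) (Fin n) ℝ) (v : ℕ → Fin n → ℝ)
    (t : ℕ → ℕ → ℝ) (j : ℕ) : Prop where
  orthonormal : ∀ i l, 1 ≤ i → i ≤ j + 1 → 1 ≤ l → l ≤ j + 1 →
    v i ⬝ᵥ v l = if i = l then 1 else 0
  mulVec_eq : ∀ k, 1 ≤ k → k ≤ j →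
    A *ᵥ v k = (∑ i ∈ Finset.Icc 1 k, t i k • v i) + t (k+1) k • v (k+1)

namespace IsArnoldiBasis

variable {n : ℕ} {A : Matrix (Fin n) (Fin n) ℝ} {v : ℕ → Fin n → ℝ} {t : ℕ → ℕ → ℝ} {j : ℕ}

theorem dotProduct_self (h : IsArnoldiBasis A v t j) {i : ℕ} (hi : 1 ≤ i) (hij : i ≤ j + 1) :
    v i ⬝ᵥ v i = 1 := by
  rw [h.orthonormal i i hi hij hi hij, if_pos rfl]

theorem dotProduct_mulVec (h : IsArnoldiBasis A v t j) {i l : ℕ} (hi : 1 ≤ i) (hij : i ≤ j + 1)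
    (hl : 1 ≤ l) (hlj : l ≤ j) : v i ⬝ᵥ A *ᵥ v l = if i ≤ l + 1 then t i l else 0 := by
  have hsum : ∑ m ∈ Finset.Icc 1 l, t m l * (v i ⬝ᵥ v m) = if i ≤ l then t i l else 0 := by
    calc ∑ m ∈ Finset.Icc 1 l, t m l * (v i ⬝ᵥ v m)
        = ∑ m ∈ Finset.Icc 1 l, if i = m then t m l else 0 :=
          Finset.sum_congr rfl fun m hm => by
            rw [Finset.mem_Icc] at hm
            rw [h.orthonormal i m hi hij hm.1 (by omega), mul_ite, mul_one, mul_zero]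
      _ = if i ≤ l then t i l else 0 := by simp [hi]
  simp only [h.mulVec_eq l hl hlj, dotProduct_add, dotProduct_sum, dotProduct_smul, smul_eq_mul,
    hsum, h.orthonormal i (l + 1) hi hij (by omega) (by omega)]
  split_ifs <;> first | omega | simp_all

theorem coeff_symm (h : IsArnoldiBasis A v t j) (hA : A.IsSymm) {i l : ℕ} (hi : 1 ≤ i)
    (hij : i ≤ j) (hl : 1 ≤ l) (hlj : l ≤ j) :
    (if i ≤ l + 1 then t i l else 0) = if l ≤ i + 1 then t l i else 0 := by
  rw [← h.dotProduct_mulVec hi (by omega) hl hlj, ← h.dotProduct_mulVec hl (by omega) hi hij,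
    hA.dotProduct_mulVec_comm]

theorem coeff_succ_comm (h : IsArnoldiBasis A v t j) (hA : A.IsSymm) {i : ℕ} (hi : 1 ≤ i)
    (hij : i + 1 ≤ j) : t i (i + 1) = t (i + 1) i := by
  have := h.coeff_symm hA hi (by omega) (by omega) hij
  rwa [if_pos (by omega), if_pos (by omega)] at this

theorem coeff_eq_zero (h : IsArnoldiBasis A v t j) (hA : A.IsSymm) {i l : ℕ} (hi : 1 ≤ i)
    (hil : i + 1 < l) (hlj : l ≤ j) : t i l = 0 := by
  have := h.coeff_symm hA hi (by omega) (by omega) hlj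
  rwa [if_pos (by omega), if_neg (by omega)] at this

theorem mulVec_one (h : IsArnoldiBasis A v t j) (hj : 1 ≤ j) :
    A *ᵥ v 1 = t 1 1 • v 1 + t 2 1 • v 2 := by
  simpa using h.mulVec_eq 1 le_rfl hj

theorem mulVec_add_two (h : IsArnoldiBasis A v t j) (hA : A.IsSymm) {m : ℕ} (hm : m + 2 ≤ j) :
    A *ᵥ v (m + 2) = t (m + 2) (m + 1) • v (m + 1) + t (m + 2) (m + 2) • v (m + 2) +
      t (m + 3) (m + 2) • v (m + 3) := by
  have hlow : ∑ i ∈ Finset.Icc 1 m, t i (m + 2) • v i = 0 :=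
    Finset.sum_eq_zero fun i hi => by
      rw [Finset.mem_Icc] at hi
      rw [h.coeff_eq_zero hA hi.1 (by omega) hm, zero_smul]
  rw [h.mulVec_eq (m + 2) (by omega) hm, Finset.sum_Icc_succ_top (by omega),
    Finset.sum_Icc_succ_top (by omega), hlow, zero_add, h.coeff_succ_comm hA (by omega) (by omega)]

theorem transpose_mul_mul_apply (h : IsArnoldiBasis A v t j) {V : Matrix (Fin n) (Fin j) ℝ}
    (hV : ∀ r c, V r c = v ((c : ℕ) + 1) r) (i l : Fin j) :
    (Vᵀ * A * V) i l = if (i : ℕ) ≤ l + 1 then t (i + 1) (l + 1) else 0 := by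
  have hcol : ∀ c : Fin j, Vᵀ c = v ((c : ℕ) + 1) := fun c => funext fun r => hV r c
  rw [Matrix.transpose_mul_mul_apply, hcol, hcol,
    h.dotProduct_mulVec (by omega) (by omega) (by omega) (by omega)]
  simp

end IsArnoldiBasis

section DIOM

variable {n j : ℕ} {A : Matrix (Fin n) (Fin n) ℝ} {v p : ℕ → Fin n → ℝ} {t : ℕ → ℕ → ℝ}
  {u ℓ : ℕ → ℝ} {V P : Matrix (Fin n) (Fin j) ℝ} {L U : Matrix (Fin j) (Fin j) ℝ}

namespace IsArnoldiBasis

theorem lu_isUpperBidiagonal (h : IsArnoldiBasis A v t j) (hA : A.IsSymm)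
    (hV : ∀ r c, V r c = v ((c : ℕ) + 1) r) (hLU : Vᵀ * A * V = L * U)
    (hL : L.IsLowerBidiagonal) (hL1 : ∀ i, L i i = 1) (hU : U.IsUpperTriangular) :
    U.IsUpperBidiagonal :=
  hL.isUpperBidiagonal_of_mul hL1 hU fun i l hil => by
    rw [← hLU, h.transpose_mul_mul_apply hV, if_pos (by omega),
      h.coeff_eq_zero hA (by omega) (by omega) (by omega)]

theorem lu_pivot_one (h : IsArnoldiBasis A v t j) (hV : ∀ r c, V r c = v ((c : ℕ) + 1) r)
    (hLU : Vᵀ * A * V = L * U) (hL : L.IsLowerBidiagonal) (hL1 : ∀ i, L i i = 1)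
    (huD : ∀ i : Fin j, U i i = u ((i : ℕ) + 1)) (hj : 0 < j) : u 1 = t 1 1 := by
  have h00 := congrFun₂ hLU ⟨0, hj⟩ ⟨0, hj⟩
  rw [h.transpose_mul_mul_apply hV, hL.mul_apply_of_val_eq_zero rfl, hL1, one_mul, huD,
    if_pos (by omega)] at h00
  exact h00.symm

theorem lu_superdiagonal (h : IsArnoldiBasis A v t j) (hA : A.IsSymm)
    (hV : ∀ r c, V r c = v ((c : ℕ) + 1) r) (hLU : Vᵀ * A * V = L * U)
    (hL : L.IsLowerBidiagonal) (hL1 : ∀ i, L i i = 1) (hU : U.IsUpperBidiagonal)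
    {m : ℕ} (hm : m + 2 ≤ j) : U ⟨m, by omega⟩ ⟨m + 1, by omega⟩ = t (m + 2) (m + 1) := by
  rw [← hL.mul_apply_of_val_eq_succ_right hL1 hU rfl, ← hLU, h.transpose_mul_mul_apply hV,
    if_pos (by simp; omega)]
  exact h.coeff_succ_comm hA (by omega) (by omega)

theorem lu_pivot_add_two (h : IsArnoldiBasis A v t j) (hA : A.IsSymm)
    (hV : ∀ r c, V r c = v ((c : ℕ) + 1) r) (hLU : Vᵀ * A * V = L * U)
    (hL : L.IsLowerBidiagonal) (hL1 : ∀ i, L i i = 1) (hU : U.IsUpperBidiagonal)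
    (huD : ∀ i : Fin j, U i i = u ((i : ℕ) + 1)) {m : ℕ} (hm : m + 2 ≤ j)
    (hℓ : ℓ (m + 2) = t (m + 2) (m + 1) / u (m + 1)) (hu : u (m + 1) ≠ 0) :
    u (m + 2) = t (m + 2) (m + 2) - ℓ (m + 2) * t (m + 2) (m + 1) := by
  have hsub := congrFun₂ hLU ⟨m + 1, by omega⟩ ⟨m, by omega⟩
  have hdiag := congrFun₂ hLU ⟨m + 1, by omega⟩ ⟨m + 1, by omega⟩
  rw [h.transpose_mul_mul_apply hV, hL.mul_apply_of_val_eq_succ (m := ⟨m, by omega⟩) rfl,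
    hU ⟨m + 1, by omega⟩ ⟨m, by omega⟩ (by dsimp only; omega) (by dsimp only; omega), hL1, huD,
    if_pos (by simp)] at hsub
  rw [h.transpose_mul_mul_apply hV, hL.mul_apply_of_val_eq_succ (m := ⟨m, by omega⟩) rfl,
    h.lu_superdiagonal hA hV hLU hL hL1 hU hm, hL1, huD, if_pos (by simp)] at hdiag
  simp only [mul_zero, add_zero, one_mul] at hsub hdiag
  have hLsub : L ⟨m + 1, by omega⟩ ⟨m, by omega⟩ = ℓ (m + 2) := by
    rw [hℓ, eq_div_iff hu]
    exact hsub.symm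
  rw [hLsub] at hdiag
  linarith

end IsArnoldiBasis

theorem lanczos_vec_one_of_mul_eq (hPU : P * U = V) (hV : ∀ r c, V r c = v ((c : ℕ) + 1) r)
    (hp : ∀ c : Fin j, p ((c : ℕ) + 1) = fun r => P r c) (hU : U.IsUpperBidiagonal)
    (huD : ∀ i : Fin j, U i i = u ((i : ℕ) + 1)) (hj : 0 < j) : v 1 = u 1 • p 1 := by
  funext r
  have hcol := congrFun₂ hPU r ⟨0, hj⟩
  rw [hU.mul_apply_of_val_eq_zero r rfl, huD, hV] at hcol
  rw [Pi.smul_apply, hp ⟨0, hj⟩, ← hcol, smul_eq_mul, mul_comm]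

theorem lanczos_vec_add_two_of_mul_eq (hPU : P * U = V) (hV : ∀ r c, V r c = v ((c : ℕ) + 1) r)
    (hp : ∀ c : Fin j, p ((c : ℕ) + 1) = fun r => P r c) (hU : U.IsUpperBidiagonal)
    (huD : ∀ i : Fin j, U i i = u ((i : ℕ) + 1)) {m : ℕ} (hm : m + 2 ≤ j)
    (hsuper : U ⟨m, by omega⟩ ⟨m + 1, by omega⟩ = t (m + 2) (m + 1)) :
    v (m + 2) = t (m + 2) (m + 1) • p (m + 1) + u (m + 2) • p (m + 2) := by
  funext r
  have hcol := congrFun₂ hPU r ⟨m + 1, by omega⟩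
  rw [hU.mul_apply_of_val_eq_succ r (m := ⟨m, by omega⟩) rfl, hsuper, huD, hV] at hcol
  rw [Pi.add_apply, Pi.smul_apply, Pi.smul_apply, hp ⟨m, by omega⟩, hp ⟨m + 1, by omega⟩,
    ← hcol, smul_eq_mul, smul_eq_mul, mul_comm, mul_comm (u _)]

theorem diom_direction_dotProduct_lanczos
    (horth : ∀ i l, 1 ≤ i → i ≤ j + 1 → 1 ≤ l → l ≤ j + 1 →
      v i ⬝ᵥ v l = if i = l then 1 else 0)
    (hv1 : v 1 = u 1 • p 1)
    (hv : ∀ m, m + 2 ≤ j → v (m + 2) = t (m + 2) (m + 1) • p (m + 1) + u (m + 2) • p (m + 2))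
    (hu : ∀ m < j, u (m + 1) ≠ 0) :
    ∀ m < j, p (m + 1) ⬝ᵥ v (m + 1) = (u (m + 1))⁻¹ ∧
      ∀ l, m + 1 < l → l ≤ j + 1 → p (m + 1) ⬝ᵥ v l = 0 := by
  intro m
  induction m with
  | zero =>
    intro hj
    have hp1 : p 1 = (u 1)⁻¹ • v 1 := by rw [hv1, inv_smul_smul₀ (hu 0 hj)]
    refine ⟨?_, fun l hl hlj => ?_⟩
    · rw [hp1, smul_dotProduct, horth 1 1 le_rfl (by omega) le_rfl (by omega), if_pos rfl,
        smul_eq_mul, mul_one]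
    · rw [hp1, smul_dotProduct, horth 1 l le_rfl (by omega) (by omega) hlj, if_neg (by omega),
        smul_zero]
  | succ m ih =>
    intro hm
    show p (m + 2) ⬝ᵥ v (m + 2) = (u (m + 2))⁻¹ ∧ ∀ l, m + 2 < l → l ≤ j + 1 → p (m + 2) ⬝ᵥ v l = 0
    obtain ⟨-, hprev⟩ := ih (by omega)
    have hp : p (m + 2) = (u (m + 2))⁻¹ • (v (m + 2) - t (m + 2) (m + 1) • p (m + 1)) := by
      rw [hv m hm, add_sub_cancel_left, inv_smul_smul₀ (hu (m + 1) hm)]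
    refine ⟨?_, fun l hl hlj => ?_⟩
    · rw [hp, smul_dotProduct, sub_dotProduct, smul_dotProduct,
        hprev (m + 2) (by omega) (by omega), horth (m + 2) (m + 2) (by omega) (by omega)
        (by omega) (by omega), if_pos rfl]
      simp
    · rw [hp, smul_dotProduct, sub_dotProduct, smul_dotProduct,
        hprev l (by omega) hlj, horth (m + 2) l (by omega) (by omega) (by omega) hlj,
        if_neg (by omega)]
      simp

theorem IsArnoldiBasis.mulVec_diom_direction (h : IsArnoldiBasis A v t j) (hA : A.IsSymm)
    (hu1 : u 1 = t 1 1)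
    (hu2 : ∀ m, m + 2 ≤ j → u (m + 2) = t (m + 2) (m + 2) - ℓ (m + 2) * t (m + 2) (m + 1))
    (hℓ : ∀ k, 1 ≤ k → k ≤ j → ℓ (k + 1) = t (k + 1) k / u k)
    (hv1 : v 1 = u 1 • p 1)
    (hv : ∀ m, m + 2 ≤ j → v (m + 2) = t (m + 2) (m + 1) • p (m + 1) + u (m + 2) • p (m + 2))
    (hu : ∀ m < j, u (m + 1) ≠ 0) :
    ∀ m < j, A *ᵥ p (m + 1) = v (m + 1) + ℓ (m + 2) • v (m + 2) := by
  intro m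
  induction m with
  | zero =>
    intro hj
    have hp1 : p 1 = (u 1)⁻¹ • v 1 := by rw [hv1, inv_smul_smul₀ (hu 0 hj)]
    rw [hp1, mulVec_smul, h.mulVec_one hj, hℓ 1 le_rfl hj, ← hu1, smul_add,
      inv_smul_smul₀ (hu 0 hj), smul_smul, inv_mul_eq_div]
  | succ m ih =>
    intro hm
    show A *ᵥ p (m + 2) = v (m + 2) + ℓ (m + 3) • v (m + 3)
    have hp : u (m + 2) • p (m + 2) = v (m + 2) - t (m + 2) (m + 1) • p (m + 1) := by
      rw [hv m hm, add_sub_cancel_left]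
    have hcancel : u (m + 2) * (t (m + 3) (m + 2) / u (m + 2)) = t (m + 3) (m + 2) :=
      mul_div_cancel₀ _ (hu (m + 1) hm)
    apply smul_right_injective _ (hu (m + 1) hm)
    simp only
    rw [← mulVec_smul, hp, mulVec_sub, mulVec_smul, ih (by omega), h.mulVec_add_two hA hm,
      hℓ (m + 2) (by omega) hm]
    linear_combination (norm := module) -(hu2 m hm) • v (m + 2) - hcancel • v (m + 3)

theorem IsArnoldiBasis.diom_relations_of_lu (h : IsArnoldiBasis A v t j) (hA : A.IsSymm)
    (hV : ∀ r c, V r c = v ((c : ℕ) + 1) r) (hLU : Vᵀ * A * V = L * U)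
    (hL : L.IsLowerBidiagonal) (hL1 : ∀ i, L i i = 1) (hU : U.IsUpperTriangular)
    (huD : ∀ i : Fin j, U i i = u ((i : ℕ) + 1)) (hPU : P * U = V)
    (hp : ∀ c : Fin j, p ((c : ℕ) + 1) = fun r => P r c)
    (hℓ : ∀ k, 1 ≤ k → k ≤ j → ℓ (k + 1) = t (k + 1) k / u k) (hu : ∀ m < j, u (m + 1) ≠ 0)
    (hj : 0 < j) :
    v 1 = u 1 • p 1 ∧
      (∀ m, m + 2 ≤ j → v (m + 2) = t (m + 2) (m + 1) • p (m + 1) + u (m + 2) • p (m + 2)) ∧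
      ∀ m < j, A *ᵥ p (m + 1) = v (m + 1) + ℓ (m + 2) • v (m + 2) := by
  have hUbi := h.lu_isUpperBidiagonal hA hV hLU hL hL1 hU
  have hv1 := lanczos_vec_one_of_mul_eq hPU hV hp hUbi huD hj
  have hv := fun m (hm : m + 2 ≤ j) => lanczos_vec_add_two_of_mul_eq hPU hV hp hUbi huD hm
    (h.lu_superdiagonal hA hV hLU hL hL1 hUbi hm)
  refine ⟨hv1, hv, h.mulVec_diom_direction hA (h.lu_pivot_one hV hLU hL hL1 huD hj)
    (fun m hm => ?_) hℓ hv1 hv hu⟩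
  exact h.lu_pivot_add_two hA hV hLU hL hL1 hUbi huD hm (hℓ (m + 1) (by omega) (by omega))
    (hu m (by omega))

end DIOM

section CG

variable {n : ℕ} {A : Matrix (Fin n) (Fin n) ℝ} {g g' d w w' q q' : Fin n → ℝ} {ζ ζ' u u' ℓ τ : ℝ}

theorem cg_stepLength_eq (hg : g = -ζ • w) (hd : d = (ζ * u) • q) (hw : w ⬝ᵥ w = 1)
    (hq : q ⬝ᵥ A *ᵥ q = u⁻¹) (hζ : ζ ≠ 0) (hu : u ≠ 0) :
    g ⬝ᵥ g / (d ⬝ᵥ A *ᵥ d) = u⁻¹ := by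
  subst hg hd
  simp only [mulVec_smul, dotProduct_smul, smul_dotProduct, hw, hq, smul_eq_mul]
  field_simp

theorem cg_gradient_step (hg : g = -ζ • w) (hd : d = (ζ * u) • q) (hAq : A *ᵥ q = w + ℓ • w')
    (hζ' : ζ' = -ℓ * ζ) (hu : u ≠ 0) : g + u⁻¹ • A *ᵥ d = -ζ' • w' := by
  subst hg hd hζ'
  rw [mulVec_smul, hAq, smul_smul, smul_add, smul_smul]
  field_simp
  module

theorem cg_direction_step (hg' : g' = -ζ' • w') (hg : g = -ζ • w) (hw : w ⬝ᵥ w = 1)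
    (hw' : w' ⬝ᵥ w' = 1) (hd : d = (ζ * u) • q) (hw'q : w' = τ • q + u' • q')
    (hζ' : ζ' = -(τ / u) * ζ) (hζ : ζ ≠ 0) (hu : u ≠ 0) :
    -g' + (g' ⬝ᵥ g' / (g ⬝ᵥ g)) • d = (ζ' * u') • q' := by
  have hgg : g ⬝ᵥ g = ζ ^ 2 := by
    simp only [hg, dotProduct_smul, smul_dotProduct, hw, smul_eq_mul]; ring
  have hgg' : g' ⬝ᵥ g' = ζ' ^ 2 := by
    simp only [hg', dotProduct_smul, smul_dotProduct, hw', smul_eq_mul]; ring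
  have hcoeff : ζ' ^ 2 / ζ ^ 2 * (ζ * u) = -(ζ' * τ) := by
    rw [hζ']
    field_simp
  rw [hgg, hgg', hg', hd, hw'q]
  linear_combination (norm := module) hcoeff • q

end CG

section CGSequence

variable {n j : ℕ} {A : Matrix (Fin n) (Fin n) ℝ} {v p : ℕ → Fin n → ℝ} {t : ℕ → ℕ → ℝ}
  {u ℓ ζ : ℕ → ℝ} {g d : ℕ → Fin n → ℝ} {α : ℕ → ℝ}

theorem cg_gradient_succ {b : Fin n → ℝ} {x : ℕ → Fin n → ℝ} (hg : ∀ k, g k = A *ᵥ x k - b)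
    (hx : ∀ k, x (k + 1) = x k + α k • d k) (k : ℕ) : g (k + 1) = g k + α k • A *ᵥ d k := by
  rw [hg, hg, hx, mulVec_add, mulVec_smul]
  abel

theorem diom_coeff_ne_zero (hζ1 : ζ 1 ≠ 0) (hζ : ∀ k, 1 ≤ k → k ≤ j → ζ (k + 1) = -ℓ (k + 1) * ζ k)
    (hℓ : ∀ m < j, ℓ (m + 2) ≠ 0) : ∀ m ≤ j, ζ (m + 1) ≠ 0 := by
  intro m
  induction m with
  | zero => exact fun _ => hζ1
  | succ m ih =>
    intro hm
    rw [hζ (m + 1) (by omega) hm]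
    exact mul_ne_zero (neg_ne_zero.2 (hℓ m hm)) (ih (by omega))

theorem IsArnoldiBasis.cg_eq_diom (h : IsArnoldiBasis A v t j)
    (hAp : ∀ m < j, A *ᵥ p (m + 1) = v (m + 1) + ℓ (m + 2) • v (m + 2))
    (hv1 : v 1 = u 1 • p 1)
    (hv : ∀ m, m + 2 ≤ j → v (m + 2) = t (m + 2) (m + 1) • p (m + 1) + u (m + 2) • p (m + 2))
    (hℓ : ∀ k, 1 ≤ k → k ≤ j → ℓ (k + 1) = t (k + 1) k / u k)
    (hζ : ∀ k, 1 ≤ k → k ≤ j → ζ (k + 1) = -ℓ (k + 1) * ζ k)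
    (hu : ∀ m < j, u (m + 1) ≠ 0) (hζne : ∀ m < j, ζ (m + 1) ≠ 0)
    (hg0 : g 0 = -ζ 1 • v 1) (hd0 : d 0 = -g 0) (hg : ∀ k, g (k + 1) = g k + α k • A *ᵥ d k)
    (hd : ∀ k, d (k + 1) = -g (k + 1) + ((g (k + 1) ⬝ᵥ g (k + 1)) / (g k ⬝ᵥ g k)) • d k)
    (hα : ∀ k, α k = (g k ⬝ᵥ g k) / (d k ⬝ᵥ (A *ᵥ d k))) :
    ∀ m < j, g m = -ζ (m + 1) • v (m + 1) ∧ d m = (ζ (m + 1) * u (m + 1)) • p (m + 1) ∧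
      α m = (u (m + 1))⁻¹ := by
  have hpAp : ∀ m < j, p (m + 1) ⬝ᵥ A *ᵥ p (m + 1) = (u (m + 1))⁻¹ := fun m hm => by
    obtain ⟨hpv, hpv'⟩ := diom_direction_dotProduct_lanczos h.orthonormal hv1 hv hu m hm
    rw [hAp m hm, dotProduct_add, dotProduct_smul, hpv, hpv' (m + 2) (by omega) (by omega),
      smul_zero, add_zero]
  have hstep : ∀ m < j, g m = -ζ (m + 1) • v (m + 1) →
      d m = (ζ (m + 1) * u (m + 1)) • p (m + 1) → α m = (u (m + 1))⁻¹ := fun m hm hgm hdm =>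
    (hα m).trans <| cg_stepLength_eq hgm hdm (h.dotProduct_self (by omega) (by omega))
      (hpAp m hm) (hζne m hm) (hu m hm)
  intro m
  induction m with
  | zero =>
    intro hj
    have hd0' : d 0 = (ζ 1 * u 1) • p 1 := by rw [hd0, hg0, neg_smul, neg_neg, hv1, smul_smul]
    exact ⟨hg0, hd0', hstep 0 hj hg0 hd0'⟩
  | succ m ih =>
    intro hm
    obtain ⟨hgm, hdm, hαm⟩ := ih (by omega)
    have hgm' : g (m + 1) = -ζ (m + 2) • v (m + 2) := by
      rw [hg, hαm]
      exact cg_gradient_step hgm hdm (hAp m (by omega)) (hζ (m + 1) (by omega) (by omega))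
        (hu m (by omega))
    have hdm' : d (m + 1) = (ζ (m + 2) * u (m + 2)) • p (m + 2) := by
      rw [hd]
      exact cg_direction_step hgm' hgm (h.dotProduct_self (by omega) (by omega))
        (h.dotProduct_self (by omega) (by omega)) hdm (hv m hm)
        (by rw [hζ (m + 1) (by omega) (by omega), hℓ (m + 1) (by omega) (by omega)])
        (hζne m (by omega)) (hu m (by omega))
    exact ⟨hgm', hdm', hstep (m + 1) hm hgm' hdm'⟩

end CGSequence

theorem cg_from_diom_general
    (n : ℕ) (A : Matrix (Fin n) (Fin n) ℝ) (hA : A.IsSymm)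
    (b x0 : Fin n → ℝ) (j : ℕ)
    (β : ℝ)
    -- Lanczos process (vectors indexed from 1)
    (v : ℕ → Fin n → ℝ) (t : ℕ → ℕ → ℝ)
    (hv1 : v 1 = β⁻¹ • (b - A *ᵥ x0))
    (horth : ∀ i l, 1 ≤ i → i ≤ j + 1 → 1 ≤ l → l ≤ j + 1 →
      v i ⬝ᵥ v l = if i = l then 1 else 0)
    (harn : ∀ k, 1 ≤ k → k ≤ j →
      A *ᵥ v k = (∑ i ∈ Finset.Icc 1 k, t i k • v i) + t (k+1) k • v (k+1))
    (htpos : ∀ k, 1 ≤ k → k ≤ j → 0 < t (k+1) k)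
    (V : (k : ℕ) → Matrix (Fin n) (Fin k) ℝ)
    (hV : ∀ k, ∀ (r : Fin n) (c : Fin k), V k r c = v ((c : ℕ) + 1) r)
    (T : (k : ℕ) → Matrix (Fin k) (Fin k) ℝ)
    (hT : ∀ k, T k = (V k)ᵀ * A * V k)
    -- LU factorization T_k = L_k U_k
    (L U : (k : ℕ) → Matrix (Fin k) (Fin k) ℝ)
    (hLU : ∀ k, 1 ≤ k → k ≤ j → T k = L k * U k)
    (hLdiag : ∀ k, k ≤ j → ∀ i : Fin k, L k i i = 1)
    (hLlow : ∀ k, k ≤ j → ∀ i l : Fin k,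
      (i : ℕ) ≠ (l : ℕ) → (i : ℕ) ≠ (l : ℕ) + 1 → L k i l = 0)
    (hUtri : ∀ k, k ≤ j → ∀ i l : Fin k, (l : ℕ) < (i : ℕ) → U k i l = 0)
    -- pivots and subdiagonal multipliers as scalar sequences
    (uD : ℕ → ℝ)
    (huD : ∀ k, k ≤ j → ∀ i : Fin k, U k i i = uD ((i : ℕ) + 1))
    (ℓs : ℕ → ℝ)
    (hls : ∀ k, 1 ≤ k → k ≤ j → ℓs (k+1) = t (k+1) k / uD k)
    -- solution coefficients ζ_k
    (ζ : ℕ → ℝ) (hζ1 : ζ 1 = β)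
    (hζ : ∀ k, 1 ≤ k → k ≤ j → ζ (k+1) = -ℓs (k+1) * ζ k)
    -- P_k = V_k U_k⁻¹ with P_kᵀ A P_k symmetric positive definite
    (P : (k : ℕ) → Matrix (Fin n) (Fin k) ℝ)
    (hP : ∀ k, P k = V k * (U k)⁻¹)
    (hSPD : ∀ k, 1 ≤ k → k ≤ j → ((P k)ᵀ * A * P k).PosDef)
    -- the DIOM direction vectors p_k (columns of P_k) and iterates
    (p : ℕ → Fin n → ℝ)
    (hpcol : ∀ k, 1 ≤ k → k ≤ j → ∀ c : Fin k, p ((c : ℕ) + 1) = fun r => P k r c)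
    -- CG (PCG with H₀ = I) from the same starting point
    (xC dC gC : ℕ → Fin n → ℝ) (αC : ℕ → ℝ)
    (hgC : ∀ k, gC k = A *ᵥ xC k - b)
    (hxC0 : xC 0 = x0)
    (hdC0 : dC 0 = -gC 0)
    (hαC : ∀ k, αC k = (gC k ⬝ᵥ gC k) / (dC k ⬝ᵥ (A *ᵥ dC k)))
    (hdC : ∀ k, dC (k+1) = -gC (k+1) + ((gC (k+1) ⬝ᵥ gC (k+1)) / (gC k ⬝ᵥ gC k)) • dC k)
    (hxC : ∀ k, xC (k+1) = xC k + αC k • dC k) :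
    ∀ k, k + 1 ≤ j →
      dC k = (ζ (k+1) * uD (k+1)) • p (k+1) ∧
      αC k = 1 / uD (k+1) ∧
      (αC k < 0 ↔ uD (k+1) < 0) := by
  intro k hk
  have hj : 0 < j := by omega
  have : Nonempty (Fin j) := ⟨⟨0, hj⟩⟩
  have hlan : IsArnoldiBasis A v t j := ⟨horth, harn⟩
  have hTLU : (V j)ᵀ * A * V j = L j * U j := (hT j).symm.trans (hLU j hj le_rfl)
  have hUtri' : (U j).IsUpperTriangular := fun i l => hUtri j le_rfl i l
  have hUdet : IsUnit (U j).det := isUnit_det_of_posDef_transpose_mul_mul (hP j ▸ hSPD j hj le_rfl)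
  have hu : ∀ m < j, uD (m + 1) ≠ 0 := fun m hm =>
    huD j le_rfl ⟨m, hm⟩ ▸ hUtri'.apply_self_ne_zero hUdet _
  have hPU : P j * U j = V j := by rw [hP, nonsing_inv_mul_cancel_right _ _ hUdet]
  obtain ⟨hv1', hv', hAp⟩ := hlan.diom_relations_of_lu hA (hV j) hTLU (hLlow j le_rfl)
    (hLdiag j le_rfl) hUtri' (huD j le_rfl) hPU (hpcol j hj le_rfl) hls hu hj
  have hβ : β ≠ 0 := by
    rintro rfl
    simpa [hv1] using hlan.dotProduct_self le_rfl (by omega)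
  have hζne := diom_coeff_ne_zero (hζ1 ▸ hβ) hζ fun m hm =>
    hls (m + 1) (by omega) hm ▸ div_ne_zero (htpos (m + 1) (by omega) hm).ne' (hu m hm)
  have hg0 : gC 0 = -ζ 1 • v 1 := by
    rw [hgC, hxC0, hζ1, hv1, neg_smul, smul_inv_smul₀ hβ, neg_sub]
  obtain ⟨-, hd, hα⟩ := hlan.cg_eq_diom hAp hv1' hv' hls hζ hu (fun m hm => hζne m hm.le) hg0 hdC0
    (cg_gradient_succ hgC hxC) hdC hαC k hk
  exact ⟨hd, by rw [hα, one_div], by rw [hα, inv_lt_zero]⟩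

/-- Running CG and DIOM on the same SPD-curvature problem
(`P_kᵀ A P_k ≻ 0` for `k = 1,…,j`), the CG direction and step length are recovered from
the DIOM quantities: `d_k^{CG} = ζ_{k+1} u_{k+1,k+1} p_{k+1}` and
`α_k^{CG} = 1/u_{k+1,k+1}`; in particular negative curvature in CG corresponds exactly
to a negative pivot in DIOM. -/
theorem cg_from_diom
    (n : ℕ) (A : Matrix (Fin n) (Fin n) ℝ) (hA : A.IsSymm)
    (b x0 : Fin n → ℝ) (j : ℕ)
    (β : ℝ) (hβ : β = Real.sqrt ((b - A *ᵥ x0) ⬝ᵥ (b - A *ᵥ x0)))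
    (hr0 : b - A *ᵥ x0 ≠ 0)
    -- Lanczos process (vectors indexed from 1)
    (v : ℕ → Fin n → ℝ) (t : ℕ → ℕ → ℝ)
    (hv1 : v 1 = β⁻¹ • (b - A *ᵥ x0))
    (horth : ∀ i l, 1 ≤ i → i ≤ j + 1 → 1 ≤ l → l ≤ j + 1 →
      v i ⬝ᵥ v l = if i = l then 1 else 0)
    (harn : ∀ k, 1 ≤ k → k ≤ j →
      A *ᵥ v k = (∑ i ∈ Finset.Icc 1 k, t i k • v i) + t (k+1) k • v (k+1))
    (htpos : ∀ k, 1 ≤ k → k ≤ j → 0 < t (k+1) k)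
    (V : (k : ℕ) → Matrix (Fin n) (Fin k) ℝ)
    (hV : ∀ k, ∀ (r : Fin n) (c : Fin k), V k r c = v ((c : ℕ) + 1) r)
    (T : (k : ℕ) → Matrix (Fin k) (Fin k) ℝ)
    (hT : ∀ k, T k = (V k)ᵀ * A * V k)
    -- LU factorization T_k = L_k U_k
    (L U : (k : ℕ) → Matrix (Fin k) (Fin k) ℝ)
    (hLU : ∀ k, 1 ≤ k → k ≤ j → T k = L k * U k)
    (hLdiag : ∀ k, k ≤ j → ∀ i : Fin k, L k i i = 1)
    (hLlow : ∀ k, k ≤ j → ∀ i l : Fin k,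
      (i : ℕ) ≠ (l : ℕ) → (i : ℕ) ≠ (l : ℕ) + 1 → L k i l = 0)
    (hUtri : ∀ k, k ≤ j → ∀ i l : Fin k, (l : ℕ) < (i : ℕ) → U k i l = 0)
    -- pivots and subdiagonal multipliers as scalar sequences
    (uD : ℕ → ℝ)
    (huD : ∀ k, k ≤ j → ∀ i : Fin k, U k i i = uD ((i : ℕ) + 1))
    (ℓs : ℕ → ℝ)
    (hls : ∀ k, 1 ≤ k → k ≤ j → ℓs (k+1) = t (k+1) k / uD k)
    -- solution coefficients ζ_k
    (ζ : ℕ → ℝ) (hζ1 : ζ 1 = β)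
    (hζ : ∀ k, 1 ≤ k → k ≤ j → ζ (k+1) = -ℓs (k+1) * ζ k)
    -- P_k = V_k U_k⁻¹ with P_kᵀ A P_k symmetric positive definite
    (P : (k : ℕ) → Matrix (Fin n) (Fin k) ℝ)
    (hP : ∀ k, P k = V k * (U k)⁻¹)
    (hSPD : ∀ k, 1 ≤ k → k ≤ j → ((P k)ᵀ * A * P k).PosDef)
    -- the DIOM direction vectors p_k (columns of P_k) and iterates
    (p : ℕ → Fin n → ℝ)
    (hpcol : ∀ k, 1 ≤ k → k ≤ j → ∀ c : Fin k, p ((c : ℕ) + 1) = fun r => P k r c)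
    (xD : ℕ → Fin n → ℝ)
    (hxD0 : xD 0 = x0)
    (hxD : ∀ k, 1 ≤ k → k ≤ j → xD k = xD (k - 1) + ζ k • p k)
    -- CG (PCG with H₀ = I) from the same starting point
    (xC dC gC : ℕ → Fin n → ℝ) (αC : ℕ → ℝ)
    (hgC : ∀ k, gC k = A *ᵥ xC k - b)
    (hxC0 : xC 0 = x0)
    (hdC0 : dC 0 = -gC 0)
    (hαC : ∀ k, αC k = (gC k ⬝ᵥ gC k) / (dC k ⬝ᵥ (A *ᵥ dC k)))
    (hdC : ∀ k, dC (k+1) = -gC (k+1) + ((gC (k+1) ⬝ᵥ gC (k+1)) / (gC k ⬝ᵥ gC k)) • dC k)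
    (hxC : ∀ k, xC (k+1) = xC k + αC k • dC k) :
    ∀ k, k + 1 ≤ j →
      dC k = (ζ (k+1) * uD (k+1)) • p (k+1) ∧
      αC k = 1 / uD (k+1) ∧
      (αC k < 0 ↔ uD (k+1) < 0) :=
  cg_from_diom_general n A hA b x0 j β v t hv1 horth harn htpos V hV T hT L U hLU hLdiag hLlow hUtri
    uD huD ℓs hls ζ hζ1 hζ P hP hSPD p hpcol xC dC gC αC hgC hxC0 hdC0 hαC hdC hxC
end

section
/- Let A be symmetric tridiagonal (k+1)×(k+1) with entries given in terms of positive scalars α₀,…,α_k and β₀,…,β_{k−1} > 0 by: diagonal (1/α₀, 1/α₁ + β₀/α₀, …, 1/α_k + β_{k−1}/α_{k−1}) and off-diagonal entries √β_{j−1}/α_{j−1}. Then the LU factorization T = LU with L unit lower bidiagonal and U upper bidiagonal exists and satisfies ℓ_{i+1,i} = √β_{i−1}, u_{i,i+1} = √β_{i−1}/α_{i−1} for i = 1,…,k, and u_{j+1,j+1} = 1/α_j for j = 0,…,k. -/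
/-!
Take `L = I + subdiag (√β₀, …, √β_{k-1})` and `U = diag (1/α₀, …, 1/α_k) + superdiag (√β_i / α_i)`.
A unit lower bidiagonal times an upper bidiagonal matrix is tridiagonal, with superdiagonal that
of `U`, subdiagonal `ℓ_i d_i` and diagonal `d_i + ℓ_{i-1} u_{i-1}`. Here these are
`√β_i / α_i` and `1/α_i + √β_{i-1} · √β_{i-1} / α_{i-1}`, which match `T` since `β_{i-1} ≥ 0`.
-/

open Matrix

namespace Matrix

variable {R : Type*}

def unitLowerBidiagonal [Zero R] [One R] (n : ℕ) (ℓ : ℕ → R) : Matrix (Fin n) (Fin n) R :=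
  of fun i j => if (i : ℕ) = j then 1 else if (i : ℕ) = j + 1 then ℓ j else 0

def upperBidiagonal [Zero R] (n : ℕ) (d u : ℕ → R) : Matrix (Fin n) (Fin n) R :=
  of fun i j => if (i : ℕ) = j then d i else if (j : ℕ) = i + 1 then u i else 0

theorem ext_of_tridiagonal [Zero R] {n : ℕ} {A B : Matrix (Fin n) (Fin n) R}
    (hA : ∀ i j : Fin n, (i : ℕ) + 1 < j ∨ (j : ℕ) + 1 < i → A i j = 0)
    (hB : ∀ i j : Fin n, (i : ℕ) + 1 < j ∨ (j : ℕ) + 1 < i → B i j = 0)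
    (hdiag : ∀ i, A i i = B i i)
    (hsuper : ∀ i (h : i + 1 < n), A ⟨i, by omega⟩ ⟨i + 1, h⟩ = B ⟨i, by omega⟩ ⟨i + 1, h⟩)
    (hsub : ∀ i (h : i + 1 < n), A ⟨i + 1, h⟩ ⟨i, by omega⟩ = B ⟨i + 1, h⟩ ⟨i, by omega⟩) :
    A = B := by
  ext ⟨i, hi⟩ ⟨j, hj⟩
  rcases (by omega : i = j ∨ j = i + 1 ∨ i = j + 1 ∨ i + 1 < j ∨ j + 1 < i)
    with rfl | rfl | rfl | hband
  · exact hdiag _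
  · exact hsuper i hj
  · exact hsub j hi
  · rw [hA _ _ hband, hB _ _ hband]

variable [NonAssocSemiring R] {n : ℕ} (ℓ d u : ℕ → R)

theorem unitLowerBidiagonal_mul_apply_zero (M : Matrix (Fin n) (Fin n) R) (h : 0 < n)
    (j : Fin n) : (unitLowerBidiagonal n ℓ * M) ⟨0, h⟩ j = M ⟨0, h⟩ j := by
  rw [mul_apply, Fintype.sum_eq_single ⟨0, h⟩]
  · simp [unitLowerBidiagonal]
  · intro m hm
    simp only [ne_eq, Fin.ext_iff] at hm
    simp [unitLowerBidiagonal, Ne.symm hm]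

theorem unitLowerBidiagonal_mul_apply_succ (M : Matrix (Fin n) (Fin n) R) (i : ℕ)
    (h : i + 1 < n) (j : Fin n) :
    (unitLowerBidiagonal n ℓ * M) ⟨i + 1, h⟩ j = ℓ i * M ⟨i, by omega⟩ j + M ⟨i + 1, h⟩ j := by
  rw [mul_apply, Fintype.sum_eq_add ⟨i, by omega⟩ ⟨i + 1, h⟩ (by simp [Fin.ext_iff])]
  · simp [unitLowerBidiagonal]
  · rintro m ⟨hm, hm'⟩
    simp only [ne_eq, Fin.ext_iff] at hm hm'
    simp [unitLowerBidiagonal, Ne.symm hm, Ne.symm hm']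

theorem unitLowerBidiagonal_mul_upperBidiagonal_apply_of_band (i j : Fin n)
    (h : (i : ℕ) + 1 < j ∨ (j : ℕ) + 1 < i) :
    (unitLowerBidiagonal n ℓ * upperBidiagonal n d u) i j = 0 := by
  obtain ⟨_ | i, hi⟩ := i <;> dsimp only at h
  · rw [unitLowerBidiagonal_mul_apply_zero]
    simp only [upperBidiagonal, of_apply]
    rw [if_neg (by omega), if_neg (by omega)]
  · rw [unitLowerBidiagonal_mul_apply_succ]
    simp only [upperBidiagonal, of_apply]
    rw [if_neg (by omega), if_neg (by omega), if_neg (by omega), if_neg (by omega), mul_zero,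
      zero_add]

theorem unitLowerBidiagonal_mul_upperBidiagonal_apply_zero_zero (h : 0 < n) :
    (unitLowerBidiagonal n ℓ * upperBidiagonal n d u) ⟨0, h⟩ ⟨0, h⟩ = d 0 := by
  simp [unitLowerBidiagonal_mul_apply_zero, upperBidiagonal]

theorem unitLowerBidiagonal_mul_upperBidiagonal_apply_succ_succ (i : ℕ) (h : i + 1 < n) :
    (unitLowerBidiagonal n ℓ * upperBidiagonal n d u) ⟨i + 1, h⟩ ⟨i + 1, h⟩ =
      ℓ i * u i + d (i + 1) := by
  simp [unitLowerBidiagonal_mul_apply_succ, upperBidiagonal]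

theorem unitLowerBidiagonal_mul_upperBidiagonal_apply_succ_right (i : ℕ) (h : i + 1 < n) :
    (unitLowerBidiagonal n ℓ * upperBidiagonal n d u) ⟨i, by omega⟩ ⟨i + 1, h⟩ = u i := by
  cases i with
  | zero => simp [unitLowerBidiagonal_mul_apply_zero, upperBidiagonal]
  | succ i =>
    simp [unitLowerBidiagonal_mul_apply_succ, upperBidiagonal,
      if_neg (show i ≠ i + 1 + 1 by omega)]

theorem unitLowerBidiagonal_mul_upperBidiagonal_apply_succ_left (i : ℕ) (h : i + 1 < n) :
    (unitLowerBidiagonal n ℓ * upperBidiagonal n d u) ⟨i + 1, h⟩ ⟨i, by omega⟩ = ℓ i * d i := by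
  simp [unitLowerBidiagonal_mul_apply_succ, upperBidiagonal,
    if_neg (show i ≠ i + 1 + 1 by omega)]

end Matrix

/-- The symmetric tridiagonal Lanczos matrix written in terms of CG
coefficients — diagonal `(1/α₀, 1/α₁ + β₀/α₀, …, 1/α_k + β_{k−1}/α_{k−1})` and
off-diagonal entries `√β_{j−1}/α_{j−1}` — admits an LU factorization `T = L U` with `L`
unit lower bidiagonal and `U` upper bidiagonal satisfying `ℓ_{i+1,i} = √β_{i−1}`,
`u_{i,i+1} = √β_{i−1}/α_{i−1}`, and `u_{j+1,j+1} = 1/α_j`. -/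
theorem lanczos_tridiagonal_lu
    (k : ℕ) (α β : ℕ → ℝ)
    (hβ : ∀ i, i < k → 0 < β i)
    (T : Matrix (Fin (k+1)) (Fin (k+1)) ℝ)
    (hdiag : ∀ i : Fin (k+1),
      T i i = if (i : ℕ) = 0 then 1 / α 0
              else 1 / α i + β ((i : ℕ) - 1) / α ((i : ℕ) - 1))
    (hsuper : ∀ i : ℕ, ∀ h : i < k,
      T ⟨i, by omega⟩ ⟨i + 1, by omega⟩ = Real.sqrt (β i) / α i)
    (hsub : ∀ i : ℕ, ∀ h : i < k,
      T ⟨i + 1, by omega⟩ ⟨i, by omega⟩ = Real.sqrt (β i) / α i)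
    (hband : ∀ i l : Fin (k+1), (i : ℕ) + 1 < (l : ℕ) ∨ (l : ℕ) + 1 < (i : ℕ) →
      T i l = 0) :
    ∃ L U : Matrix (Fin (k+1)) (Fin (k+1)) ℝ,
      -- L is unit lower bidiagonal
      (∀ i : Fin (k+1), L i i = 1) ∧
      (∀ i l : Fin (k+1), (i : ℕ) ≠ (l : ℕ) → (i : ℕ) ≠ (l : ℕ) + 1 → L i l = 0) ∧
      -- U is upper bidiagonal
      (∀ i l : Fin (k+1), (i : ℕ) ≠ (l : ℕ) → (l : ℕ) ≠ (i : ℕ) + 1 → U i l = 0) ∧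
      -- T = L * U
      T = L * U ∧
      -- entries of the factors
      (∀ i : ℕ, ∀ h : i < k,
        L ⟨i + 1, by omega⟩ ⟨i, by omega⟩ = Real.sqrt (β i) ∧
        U ⟨i, by omega⟩ ⟨i + 1, by omega⟩ = Real.sqrt (β i) / α i) ∧
      (∀ i : ℕ, ∀ h : i ≤ k, U ⟨i, by omega⟩ ⟨i, by omega⟩ = 1 / α i) := by
  refine ⟨unitLowerBidiagonal (k + 1) (fun i => √(β i)),
    upperBidiagonal (k + 1) (fun i => 1 / α i) (fun i => √(β i) / α i),
    by simp [unitLowerBidiagonal], fun i l h₁ h₂ => by simp [unitLowerBidiagonal, h₁, h₂],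
    fun i l h₁ h₂ => by simp [upperBidiagonal, h₁, h₂], ?_,
    fun i h => by simp [unitLowerBidiagonal, upperBidiagonal],
    fun i h => by simp [upperBidiagonal]⟩
  refine ext_of_tridiagonal hband (unitLowerBidiagonal_mul_upperBidiagonal_apply_of_band _ _ _)
    ?_ ?_ ?_
  · rintro ⟨_ | i, hi⟩
    · rw [hdiag, unitLowerBidiagonal_mul_upperBidiagonal_apply_zero_zero, if_pos rfl]
    · rw [hdiag, unitLowerBidiagonal_mul_upperBidiagonal_apply_succ_succ, if_neg i.succ_ne_zero,
        Nat.add_sub_cancel, ← mul_div_assoc, Real.mul_self_sqrt (hβ i (by omega)).le, add_comm]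
  · intro i h
    rw [hsuper i (by omega), unitLowerBidiagonal_mul_upperBidiagonal_apply_succ_right]
  · intro i h
    rw [hsub i (by omega), unitLowerBidiagonal_mul_upperBidiagonal_apply_succ_left, mul_one_div]
end
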